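/- arXiv:2602.12169 — 4 statements merged into one kernel-verified Lean document; each statement's English description precedes it below -/
import Mathlib

section
/- Let G be a finite simple graph. Then deg h_G = α(G) if and only if I(G,−1) ≠ 0. Moreover, if I(G,−1) = 0 and k = min{ i : I^{(i)}(G,−1) ≠ 0 } (this minimum exists since I^{(α(G))}(G,−1) = α(G)!·s_{α(G)}(G) ≠ 0), then deg h_G = α(G) − k. -/
open Finset Polynomial

/-- Every subset of a finite type gets a `Fintype` instance (classically). -/
noncomputable instance fintypeOfSet {V : Type*} [Finite V] (s : Set V) : Fintype ↥s :=
  Fintype.ofFinite _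

/-- `s` is an independent set of the graph `G`: no two of its vertices are adjacent. -/
def IsIndepSet {V : Type*} (G : SimpleGraph V) (s : Finset V) : Prop :=
  ∀ u ∈ s, ∀ v ∈ s, ¬ G.Adj u v

/-- The finset of all independent sets of `G`. -/
noncomputable def indepFinsets {V : Type*} [Fintype V] (G : SimpleGraph V) :
    Finset (Finset V) :=
  @Finset.filter _ (fun s => IsIndepSet G s) (Classical.decPred _) Finset.univ

/-- `sCount G i` is the number of independent sets of size `i` in `G`. -/
noncomputable def sCount {V : Type*} [Fintype V] (G : SimpleGraph V) (i : ℕ) : ℕ :=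
  ((indepFinsets G).filter (fun s => s.card = i)).card

/-- The independence number `α(G)`: the maximum size of an independent set. -/
noncomputable def indepNum {V : Type*} [Fintype V] (G : SimpleGraph V) : ℕ :=
  (indepFinsets G).sup Finset.card

/-- The independence polynomial `I(G,t) = Σ_i s_i(G) t^i ∈ ℤ[t]`. -/
noncomputable def indepPoly {V : Type*} [Fintype V] (G : SimpleGraph V) : Polynomial ℤ :=
  ∑ i ∈ Finset.range (indepNum G + 1), Polynomial.C (sCount G i : ℤ) * Polynomial.X ^ i

/-- The h-polynomial of the edge ideal of `G`:
`h_G(t) = Σ_i s_i(G) t^i (1-t)^{α(G)-i} ∈ ℤ[t]`. -/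
noncomputable def hPoly {V : Type*} [Fintype V] (G : SimpleGraph V) : Polynomial ℤ :=
  ∑ i ∈ Finset.range (indepNum G + 1),
    Polynomial.C (sCount G i : ℤ) * Polynomial.X ^ i *
      (1 - Polynomial.X) ^ (indepNum G - i)

/-- The degree of a vertex in a finite simple graph. -/
noncomputable def deg {V : Type*} [Fintype V] (G : SimpleGraph V) (v : V) : ℕ :=
  (@Finset.filter _ (fun u => G.Adj v u) (Classical.decPred _) Finset.univ).card

/-!
Write `α = α(G)` and `m` for the multiplicity of `-1` as a root of `I = I(G,t)`, so that
`I = (1+t)^m r` with `r(-1) ≠ 0` and `deg r = α - m`. The h-polynomial is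
`h_G(t) = (1-t)^α I(t/(1-t))`, and since `t + (1-t) = 1`, each factor `1+t` of `I` only lowers the
homogenizing exponent: `h_G(t) = (1-t)^(α-m) r(t/(1-t))`. The coefficient of `t^(α-m)` in the
latter is `(-1)^(α-m) r(-1) ≠ 0`, so `deg h_G = α - m`. Over `ℤ`, `m` is the least `k` with
`I^(k)(-1) ≠ 0`, and `I^(α)(-1) = α! s_α ≠ 0`.
-/

namespace Polynomial

section hTransform

variable {R : Type*} [CommRing R]

/-- `hTransform n p = (1 - X)^n p(X / (1 - X))` for `p.natDegree ≤ n`. -/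
noncomputable def hTransform (n : ℕ) (p : R[X]) : R[X] :=
  ∑ i ∈ range (n + 1), C (p.coeff i) * X ^ i * (1 - X) ^ (n - i)

theorem natDegree_hTransform_le (n : ℕ) (p : R[X]) : (hTransform n p).natDegree ≤ n := by
  refine natDegree_sum_le_of_forall_le _ _ fun i hi => ?_
  have hi : i ≤ n := Nat.lt_succ_iff.mp (mem_range.mp hi)
  have h1X : (1 - X : R[X]).natDegree ≤ 1 :=
    (natDegree_sub_le _ _).trans (max_le (natDegree_one.trans_le zero_le_one) natDegree_X_le)
  calc (C (p.coeff i) * X ^ i * (1 - X) ^ (n - i)).natDegree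
      ≤ (C (p.coeff i) * X ^ i).natDegree + ((1 - X : R[X]) ^ (n - i)).natDegree :=
        natDegree_mul_le
    _ ≤ i + (n - i) * 1 := by
        gcongr
        · exact natDegree_C_mul_X_pow_le _ _
        · exact natDegree_pow_le_of_le _ h1X
    _ = n := by omega

theorem hTransform_add (n : ℕ) (p q : R[X]) :
    hTransform n (p + q) = hTransform n p + hTransform n q := by
  simp only [hTransform, ← sum_add_distrib, coeff_add, map_add, add_mul]

theorem hTransform_succ_X_mul (n : ℕ) (p : R[X]) :
    hTransform (n + 1) (X * p) = X * hTransform n p := by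
  rw [hTransform, sum_range_succ', hTransform, mul_sum]
  simp only [coeff_X_mul, coeff_X_mul_zero, map_zero, zero_mul, add_zero,
    Nat.add_sub_add_right]
  refine sum_congr rfl fun i _ => ?_
  ring

theorem hTransform_succ_of_natDegree_le {n : ℕ} {p : R[X]} (hp : p.natDegree ≤ n) :
    hTransform (n + 1) p = (1 - X) * hTransform n p := by
  rw [hTransform, sum_range_succ, coeff_eq_zero_of_natDegree_lt (Nat.lt_succ_of_le hp),
    map_zero, zero_mul, zero_mul, add_zero, hTransform, mul_sum]
  refine sum_congr rfl fun i hi => ?_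
  rw [Nat.sub_add_comm (Nat.lt_succ_iff.mp (mem_range.mp hi)), pow_succ]
  ring

theorem hTransform_succ_X_add_one_mul {n : ℕ} {p : R[X]} (hp : p.natDegree ≤ n) :
    hTransform (n + 1) ((X + 1) * p) = hTransform n p := by
  rw [add_mul, one_mul, hTransform_add, hTransform_succ_X_mul,
    hTransform_succ_of_natDegree_le hp]
  ring

theorem hTransform_add_X_add_one_pow_mul (k : ℕ) {n : ℕ} {p : R[X]} (hp : p.natDegree ≤ n) :
    hTransform (n + k) ((X + 1) ^ k * p) = hTransform n p := by
  induction k with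
  | zero => simp
  | succ k ih =>
    have hX1 : (X + 1 : R[X]).natDegree ≤ 1 :=
      (natDegree_add_le _ _).trans (max_le natDegree_X_le (natDegree_one.trans_le zero_le_one))
    have hdeg : ((X + 1) ^ k * p).natDegree ≤ n + k :=
      calc ((X + 1) ^ k * p).natDegree ≤ ((X + 1) ^ k).natDegree + p.natDegree :=
            natDegree_mul_le
        _ ≤ k * 1 + n := add_le_add (natDegree_pow_le_of_le k hX1) hp
        _ = n + k := by ring
    rw [← add_assoc, pow_succ', mul_assoc, hTransform_succ_X_add_one_mul hdeg, ih]

theorem coeff_hTransform_self {n : ℕ} {p : R[X]} (hp : p.natDegree ≤ n) :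
    (hTransform n p).coeff n = (-1) ^ n * p.eval (-1) := by
  rw [hTransform, finsetSum_coeff, eval_eq_sum_range' (Nat.lt_succ_of_le hp), mul_sum]
  refine sum_congr rfl fun i hi => ?_
  obtain ⟨m, rfl⟩ : ∃ m, n = m + i := ⟨n - i, by have := mem_range.mp hi; omega⟩
  have hcoeff : ((1 - X : R[X]) ^ m).coeff m = (-1) ^ m := by
    rw [show (1 - X : R[X]) = C (-1) * (X + C (-1)) by rw [C_neg, C_1]; ring, mul_pow, ← C_pow,
      coeff_C_mul, coeff_X_add_C_pow, Nat.sub_self, pow_zero, Nat.choose_self, Nat.cast_one,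
      one_mul, mul_one]
  have hsq : ((-1 : R) ^ i) * (-1) ^ i = 1 := by rw [← mul_pow, neg_one_mul, neg_neg, one_pow]
  rw [Nat.add_sub_cancel, mul_assoc, coeff_C_mul, coeff_X_pow_mul, hcoeff, pow_add]
  linear_combination (-(p.coeff i) * (-1) ^ m) * hsq

theorem natDegree_hTransform_of_eval_ne_zero {n : ℕ} {p : R[X]} (hp : p.natDegree ≤ n)
    (h : p.eval (-1) ≠ 0) : (hTransform n p).natDegree = n := by
  refine (natDegree_hTransform_le n p).antisymm (le_natDegree_of_ne_zero ?_)
  rw [coeff_hTransform_self hp]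
  exact ((isUnit_neg_one.pow n).mul_right_eq_zero).not.mpr h

theorem natDegree_hTransform_natDegree [Nontrivial R] {p : R[X]} (hp : p ≠ 0) :
    (hTransform p.natDegree p).natDegree = p.natDegree - p.rootMultiplicity (-1) := by
  obtain ⟨r, hpr, hr⟩ := p.exists_eq_pow_rootMultiplicity_mul_and_not_dvd hp (-1)
  set m := p.rootMultiplicity (-1)
  have hr0 : r ≠ 0 := by rintro rfl; exact hr (dvd_zero _)
  have hdeg : p.natDegree = r.natDegree + m := by
    rw [hpr, ((monic_X_sub_C _).pow m).natDegree_mul' hr0, (monic_X_sub_C _).natDegree_pow,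
      natDegree_X_sub_C, mul_one, add_comm]
  rw [C_neg, C_1, sub_neg_eq_add] at hpr
  rw [hdeg, Nat.add_sub_cancel]
  conv_lhs => rw [hpr, hTransform_add_X_add_one_pow_mul m le_rfl]
  exact natDegree_hTransform_of_eval_ne_zero le_rfl fun h => hr (dvd_iff_isRoot.mpr h)

end hTransform

theorem iterate_derivative_natDegree {R : Type*} [CommSemiring R] (p : R[X]) :
    derivative^[p.natDegree] p = C (p.natDegree.factorial * p.leadingCoeff) := by
  rw [eq_C_of_natDegree_le_zero (natDegree_iterate_derivative p p.natDegree |>.trans_eq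
    (Nat.sub_self _)), coeff_iterate_derivative, zero_add, Nat.descFactorial_self,
    nsmul_eq_mul, leadingCoeff]

theorem rootMultiplicity_eq_of_eval_iterate_derivative {R : Type*} [CommRing R]
    [NoZeroDivisors R] [CharZero R] {p : R[X]} {t : R} {k : ℕ} (hp : p ≠ 0)
    (hlt : ∀ i < k, (derivative^[i] p).eval t = 0) (hk : (derivative^[k] p).eval t ≠ 0) :
    p.rootMultiplicity t = k := by
  refine le_antisymm (not_lt.mp fun h => hk (isRoot_iterate_derivative_of_lt_rootMultiplicity h))
    ?_
  rcases Nat.eq_zero_or_pos k with rfl | hk0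
  · exact Nat.zero_le _
  · have := lt_rootMultiplicity_of_isRoot_iterate_derivative (n := k - 1) hp
      fun i hi => hlt i (by omega)
    omega

end Polynomial

section IndependencePolynomial

variable {V : Type*} [Fintype V] (G : SimpleGraph V)

theorem coeff_indepPoly {i : ℕ} (hi : i ≤ indepNum G) :
    (indepPoly G).coeff i = sCount G i := by
  simp only [indepPoly, finsetSum_coeff, coeff_C_mul_X_pow]
  rw [sum_ite_eq, if_pos (mem_range.mpr (Nat.lt_succ_of_le hi))]

theorem sCount_indepNum_pos : 0 < sCount G (indepNum G) := by
  have hempty : ∅ ∈ indepFinsets G := by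
    rw [indepFinsets, @mem_filter _ _ (Classical.decPred _)]
    exact ⟨mem_univ _, fun u hu => absurd hu (notMem_empty u)⟩
  obtain ⟨s, hs, hcard⟩ := exists_mem_eq_sup _ ⟨_, hempty⟩ card
  exact card_pos.mpr ⟨s, mem_filter.mpr ⟨hs, hcard.symm⟩⟩

theorem natDegree_indepPoly : (indepPoly G).natDegree = indepNum G := by
  refine le_antisymm (natDegree_sum_le_of_forall_le _ _ fun i hi => ?_)
    (le_natDegree_of_ne_zero ?_)
  · exact (natDegree_C_mul_X_pow_le _ _).trans (Nat.lt_succ_iff.mp (mem_range.mp hi))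
  · rw [coeff_indepPoly G le_rfl]
    exact_mod_cast (sCount_indepNum_pos G).ne'

theorem leadingCoeff_indepPoly : (indepPoly G).leadingCoeff = sCount G (indepNum G) := by
  rw [leadingCoeff, natDegree_indepPoly, coeff_indepPoly G le_rfl]

theorem indepPoly_ne_zero : indepPoly G ≠ 0 := by
  rw [← leadingCoeff_ne_zero, leadingCoeff_indepPoly]
  exact_mod_cast (sCount_indepNum_pos G).ne'

theorem hPoly_eq_hTransform : hPoly G = hTransform (indepNum G) (indepPoly G) :=
  sum_congr rfl fun i hi => by
    rw [coeff_indepPoly G (Nat.lt_succ_iff.mp (mem_range.mp hi))]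

end IndependencePolynomial

/-- `deg h_G = α(G)` iff `I(G,-1) ≠ 0`.  Moreover the minimum
`k = min{ i : I^{(i)}(G,-1) ≠ 0 }` exists since `I^{(α(G))}(G,-1) ≠ 0`, and if
`I(G,-1) = 0` then `deg h_G = α(G) - k`. -/
theorem degree_hPoly_eq_indepNum_iff {V : Type*} [Fintype V] (G : SimpleGraph V) :
    ((hPoly G).natDegree = indepNum G ↔ (indepPoly G).eval (-1) ≠ 0) ∧
    (Polynomial.derivative^[indepNum G] (indepPoly G)).eval (-1) ≠ 0 ∧
    (∀ k : ℕ, (indepPoly G).eval (-1) = 0 →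
      (∀ i < k, (Polynomial.derivative^[i] (indepPoly G)).eval (-1) = 0) →
      (Polynomial.derivative^[k] (indepPoly G)).eval (-1) ≠ 0 →
      (hPoly G).natDegree = indepNum G - k) := by
  have hI := indepPoly_ne_zero G
  have hdeg : (hPoly G).natDegree = indepNum G - (indepPoly G).rootMultiplicity (-1) := by
    rw [hPoly_eq_hTransform, ← natDegree_indepPoly, natDegree_hTransform_natDegree hI]
  have htop : (derivative^[indepNum G] (indepPoly G)).eval (-1) ≠ 0 := by
    rw [← natDegree_indepPoly, iterate_derivative_natDegree, eval_C, leadingCoeff_indepPoly,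
      natDegree_indepPoly]
    exact mul_ne_zero (by exact_mod_cast (indepNum G).factorial_ne_zero)
      (by exact_mod_cast (sCount_indepNum_pos G).ne')
  have hmult : (indepPoly G).rootMultiplicity (-1) ≤ indepNum G :=
    not_lt.mp fun h => htop (isRoot_iterate_derivative_of_lt_rootMultiplicity h)
  refine ⟨?_, htop, fun k _ hlt hk => ?_⟩
  · rw [hdeg, Ne, ← IsRoot.def, ← rootMultiplicity_pos hI]
    omega
  · rw [hdeg, rootMultiplicity_eq_of_eval_iterate_derivative hI hlt hk]
end

section
/- Let G be a finite simple graph that contains an isolated vertex, or contains two leaves u and v with d(u,v) = 3. Then I(G,−1) = 0, and consequently deg h_G < α(G). -/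
open Finset Polynomial

set_option linter.unusedSectionVars false

section AuxLemmas

variable {V : Type*} [Fintype V] {G : SimpleGraph V}

lemma mem_indepFinsets {S : Finset V} : S ∈ indepFinsets G ↔ IsIndepSet G S := by
  simp only [indepFinsets, Finset.mem_filter, Finset.mem_univ, true_and]

lemma indep_subset {S T : Finset V} (hST : S ⊆ T) (hT : IsIndepSet G T) : IsIndepSet G S :=
  fun u hu v hv => hT u (hST hu) v (hST hv)

variable [DecidableEq V]

/-- Toggle membership of `x` in `S`. -/
def tog (x : V) (S : Finset V) : Finset V := if x ∈ S then S.erase x else insert x S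

lemma tog_tog (x : V) (S : Finset V) : tog x (tog x S) = S := by
  by_cases h : x ∈ S
  · simp [tog, h, Finset.notMem_erase, Finset.insert_erase h]
  · simp [tog, h, Finset.erase_insert h]

lemma mem_tog_of_ne {x y : V} (hxy : y ≠ x) (S : Finset V) : y ∈ tog x S ↔ y ∈ S := by
  by_cases h : x ∈ S <;> simp [tog, h, hxy]

lemma tog_ne (x : V) (S : Finset V) : tog x S ≠ S := by
  intro he
  by_cases h : x ∈ S
  · rw [tog, if_pos h] at he
    exact Finset.notMem_erase x S (he.symm ▸ h)
  · rw [tog, if_neg h] at he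
    exact h (he ▸ Finset.mem_insert_self x S)

lemma neg_one_pow_card_tog (x : V) (S : Finset V) :
    (-1 : ℤ) ^ (tog x S).card = -(-1 : ℤ) ^ S.card := by
  by_cases h : x ∈ S
  · have hc : S.card = (S.erase x).card + 1 := (Finset.card_erase_add_one h).symm
    simp only [tog, h, if_true]
    rw [hc, pow_succ]; ring
  · simp only [tog, h, if_false]
    rw [Finset.card_insert_of_notMem h, pow_succ]; ring

lemma indep_tog {S : Finset V} {w : V} (hS : IsIndepSet G S)
    (hw : ∀ x ∈ S, ¬ G.Adj w x) : IsIndepSet G (tog w S) := by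
  by_cases h : w ∈ S
  · simpa [tog, h] using indep_subset (Finset.erase_subset w S) hS
  · simp only [tog, h, if_false]
    intro u hu v hv hadj
    rcases Finset.mem_insert.mp hu with rfl | hu'
    · rcases Finset.mem_insert.mp hv with rfl | hv'
      · exact G.irrefl hadj
      · exact hw v hv' hadj
    · rcases Finset.mem_insert.mp hv with rfl | hv'
      · exact hw u hu' hadj.symm
      · exact hS u hu' v hv' hadj

/-- Generic sign-reversing involution. -/
lemma sum_neg_one_pow_eq_zero (G : SimpleGraph V) (g : Finset V → V)
    (h1 : ∀ S ∈ indepFinsets G, tog (g S) S ∈ indepFinsets G)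
    (h2 : ∀ S ∈ indepFinsets G, g (tog (g S) S) = g S) :
    ∑ S ∈ indepFinsets G, (-1 : ℤ) ^ S.card = 0 := by
  refine Finset.sum_involution (fun S _ => tog (g S) S) ?_ ?_ h1 ?_
  · intro S hS
    rw [neg_one_pow_card_tog]; ring
  · intro S hS _
    exact tog_ne _ _
  · intro S hS
    rw [h2 S hS, tog_tog]

end AuxLemmas

set_option linter.unusedSectionVars false

section Part2

variable {V : Type*} [Fintype V] {G : SimpleGraph V}

lemma card_le_indepNum {S : Finset V} (hS : S ∈ indepFinsets G) : S.card ≤ indepNum G :=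
  Finset.le_sup hS

lemma eval_indepPoly' (G : SimpleGraph V) :
    (indepPoly G).eval (-1) =
      ∑ i ∈ Finset.range (indepNum G + 1), (sCount G i : ℤ) * (-1) ^ i := by
  simp [indepPoly, Polynomial.eval_finset_sum]

lemma eval_indepPoly_eq_sum (G : SimpleGraph V) :
    (indepPoly G).eval (-1) = ∑ S ∈ indepFinsets G, (-1 : ℤ) ^ S.card := by
  rw [← Finset.sum_fiberwise_of_maps_to
    (g := Finset.card) (t := Finset.range (indepNum G + 1))
    (fun S hS => Finset.mem_range.mpr (Nat.lt_succ_of_le (card_le_indepNum hS)))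
    (fun S => (-1 : ℤ) ^ S.card), eval_indepPoly']
  refine Finset.sum_congr rfl fun i _ => ?_
  rw [Finset.sum_congr rfl (fun S hS => by
    rw [(Finset.mem_filter.mp hS).2]), Finset.sum_const, sCount]
  simp [mul_comm]

lemma one_le_indepNum {w : V} : 1 ≤ indepNum G := by
  have h : ({w} : Finset V) ∈ indepFinsets G := by
    rw [mem_indepFinsets]
    intro u hu v hv hadj
    rw [Finset.mem_singleton] at hu hv
    exact G.irrefl (hu ▸ hv ▸ hadj)
  simpa using card_le_indepNum h

lemma coeff_one_sub_X_pow (k : ℕ) : ((1 - X : Polynomial ℤ) ^ k).coeff k = (-1) ^ k := by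
  have h1 : (1 - X : Polynomial ℤ) = -(X - C 1) := by
    rw [Polynomial.C_1]; ring
  have hm : ((X - C 1 : Polynomial ℤ) ^ k).coeff k = 1 := by
    have hmon : ((X - C (1:ℤ)) ^ k).Monic := (Polynomial.monic_X_sub_C 1).pow k
    have hd : ((X - C (1:ℤ)) ^ k).natDegree = k := by
      rw [Polynomial.natDegree_pow, Polynomial.natDegree_X_sub_C, mul_one]
    have := hmon.leadingCoeff
    rwa [Polynomial.leadingCoeff, hd] at this
  rw [h1, neg_pow, show ((-1 : Polynomial ℤ)) = C (-1) from by simp, ← Polynomial.C_pow,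
    Polynomial.coeff_C_mul, hm, mul_one]

lemma coeff_hPoly_indepNum (G : SimpleGraph V) :
    (hPoly G).coeff (indepNum G) = (-1) ^ (indepNum G) * (indepPoly G).eval (-1) := by
  rw [hPoly, Polynomial.finset_sum_coeff, eval_indepPoly', Finset.mul_sum]
  refine Finset.sum_congr rfl fun i hi => ?_
  have hin : i ≤ indepNum G := Nat.lt_succ_iff.mp (Finset.mem_range.mp hi)
  set k := indepNum G - i with hk
  have hni : indepNum G = k + i := by omega
  rw [hni, mul_assoc, Polynomial.coeff_C_mul, Polynomial.coeff_X_pow_mul,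
    coeff_one_sub_X_pow]
  have h2 : ((-1:ℤ)) ^ i * (-1) ^ i = 1 := by
    rw [← pow_add]; exact Even.neg_one_pow ⟨i, rfl⟩
  calc ((sCount G i : ℤ)) * (-1) ^ k
      = (sCount G i : ℤ) * (-1) ^ k * ((-1) ^ i * (-1) ^ i) := by rw [h2, mul_one]
    _ = (-1) ^ (k + i) * ((sCount G i : ℤ) * (-1) ^ i) := by rw [pow_add]; ring

lemma natDegree_hPoly_le (G : SimpleGraph V) : (hPoly G).natDegree ≤ indepNum G := by
  apply Polynomial.natDegree_sum_le_of_forall_le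
  intro i hi
  have hin : i ≤ indepNum G := Nat.lt_succ_iff.mp (Finset.mem_range.mp hi)
  have h1 : (1 - X : Polynomial ℤ).natDegree = 1 := by
    rw [show (1 - X : Polynomial ℤ) = -(X - C 1) from by rw [Polynomial.C_1]; ring,
      Polynomial.natDegree_neg, Polynomial.natDegree_X_sub_C]
  calc (C (sCount G i : ℤ) * X ^ i * (1 - X) ^ (indepNum G - i)).natDegree
      ≤ (C (sCount G i : ℤ) * X ^ i).natDegree + ((1 - X : Polynomial ℤ) ^ (indepNum G - i)).natDegree :=
        Polynomial.natDegree_mul_le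
    _ ≤ i + (indepNum G - i) * 1 := by
        gcongr
        · exact le_trans (Polynomial.natDegree_C_mul_le _ _) (le_of_eq (Polynomial.natDegree_X_pow i))
        · exact le_trans Polynomial.natDegree_pow_le (by rw [h1])
    _ ≤ indepNum G := by omega

end Part2

/-- If a finite simple graph `G` contains an isolated vertex, or two leaves
at distance `3`, then `I(G,-1) = 0` and consequently `deg h_G < α(G)`. -/
theorem eval_indepPoly_eq_zero_of_isolated_or_leaves_dist_three {V : Type*} [Fintype V]
    (G : SimpleGraph V)
    (h : (∃ v, deg G v = 0) ∨ ∃ u v, deg G u = 1 ∧ deg G v = 1 ∧ G.dist u v = 3) :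
    (indepPoly G).eval (-1) = 0 ∧ (hPoly G).natDegree < indepNum G := by
  classical
  have heval : (indepPoly G).eval (-1) = 0 := by
    rw [eval_indepPoly_eq_sum]
    rcases h with ⟨w, hw⟩ | ⟨u, v, hu, hv, hd⟩
    · -- isolated vertex
      have hw' : ∀ x, ¬ G.Adj w x := by
        intro x hx
        have hempty : (@Finset.filter _ (fun z => G.Adj w z) (Classical.decPred _)
            Finset.univ) = ∅ := Finset.card_eq_zero.mp hw
        have hmem : x ∈ (@Finset.filter _ (fun z => G.Adj w z) (Classical.decPred _)
            Finset.univ) := by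
          simp only [Finset.mem_filter, Finset.mem_univ, true_and]
          exact hx
        rw [hempty] at hmem
        exact absurd hmem (Finset.notMem_empty x)
      exact sum_neg_one_pow_eq_zero G (fun _ => w)
        (fun S hS => mem_indepFinsets.mpr
          (indep_tog (mem_indepFinsets.mp hS) (fun x _ => hw' x)))
        (fun S hS => rfl)
    · -- two leaves at distance 3
      obtain ⟨a, ha⟩ : ∃ a, ∀ x, G.Adj u x ↔ x = a := by
        obtain ⟨a, ha⟩ : ∃ a, (@Finset.filter _ (fun z => G.Adj u z) (Classical.decPred _)
            Finset.univ) = {a} := Finset.card_eq_one.mp hu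
        refine ⟨a, fun x => ?_⟩
        constructor
        · intro hx
          have : x ∈ (@Finset.filter _ (fun z => G.Adj u z) (Classical.decPred _)
              Finset.univ) := by
            simp only [Finset.mem_filter, Finset.mem_univ, true_and]; exact hx
          rw [ha] at this
          exact Finset.mem_singleton.mp this
        · rintro rfl
          have : x ∈ ({x} : Finset V) := Finset.mem_singleton_self x
          rw [← ha] at this
          exact (Finset.mem_filter.mp this).2
      obtain ⟨b, hb⟩ : ∃ b, ∀ x, G.Adj v x ↔ x = b := by
        obtain ⟨b, hb⟩ : ∃ b, (@Finset.filter _ (fun z => G.Adj v z) (Classical.decPred _)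
            Finset.univ) = {b} := Finset.card_eq_one.mp hv
        refine ⟨b, fun x => ?_⟩
        constructor
        · intro hx
          have : x ∈ (@Finset.filter _ (fun z => G.Adj v z) (Classical.decPred _)
              Finset.univ) := by
            simp only [Finset.mem_filter, Finset.mem_univ, true_and]; exact hx
          rw [hb] at this
          exact Finset.mem_singleton.mp this
        · rintro rfl
          have : x ∈ ({x} : Finset V) := Finset.mem_singleton_self x
          rw [← hb] at this
          exact (Finset.mem_filter.mp this).2
      have hr : G.Reachable u v := by
        by_contra hnr
        rw [SimpleGraph.dist_eq_zero_of_not_reachable hnr] at hd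
        omega
      obtain ⟨p, hp⟩ := hr.exists_walk_length_eq_dist
      rw [hd] at hp
      have hab : G.Adj a b := by
        cases p with
        | nil => simp at hp
        | cons h1 q =>
          cases q with
          | nil => simp at hp
          | cons h2 r =>
            cases r with
            | nil => simp at hp
            | cons h3 s =>
              cases s with
              | cons h4 t => simp only [SimpleGraph.Walk.length_cons] at hp; omega
              | nil =>
                have hxa := (ha _).mp h1
                have hyb := (hb _).mp h3.symm
                exact hxa ▸ hyb ▸ h2
      have hav : a ≠ v := by
        rintro rfl
        have hadj : G.Adj u a := (ha a).mpr rfl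
        have := SimpleGraph.dist_le (SimpleGraph.Walk.cons hadj SimpleGraph.Walk.nil)
        simp at this
        omega
      apply sum_neg_one_pow_eq_zero G (fun S => if a ∈ S then v else u)
      · intro S hS
        rw [mem_indepFinsets] at hS ⊢
        by_cases hmem : a ∈ S
        · simp only [hmem, if_true]
          refine indep_tog hS fun x hx hadj => ?_
          exact hS a hmem x hx ((hb x).mp hadj ▸ hab)
        · simp only [hmem, if_false]
          refine indep_tog hS fun x hx hadj => ?_
          exact hmem ((ha x).mp hadj ▸ hx)
      · intro S hS
        by_cases hmem : a ∈ S
        · simp only [hmem, if_true]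
          have h1 : a ∈ tog v S := (mem_tog_of_ne hav S).mpr hmem
          simp [h1]
        · simp only [hmem, if_false]
          have hau : a ≠ u := fun he => G.irrefl (he ▸ (ha a).mpr rfl)
          have h1 : a ∉ tog u S := fun hc => hmem ((mem_tog_of_ne hau S).mp hc)
          simp [h1]
  refine ⟨heval, ?_⟩
  have hn1 : 1 ≤ indepNum G := by
    rcases h with ⟨w, _⟩ | ⟨u, _, _, _, _⟩
    · exact one_le_indepNum (w := w)
    · exact one_le_indepNum (w := u)
  have hc0 : (hPoly G).coeff (indepNum G) = 0 := by
    rw [coeff_hPoly_indepNum, heval, mul_zero]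
  rcases eq_or_ne (hPoly G) 0 with h0 | h0
  · rw [h0, Polynomial.natDegree_zero]; omega
  · have hle := natDegree_hPoly_le G
    have hne : (hPoly G).natDegree ≠ indepNum G := by
      intro he
      exact (Polynomial.leadingCoeff_ne_zero.mpr h0) (by rw [Polynomial.leadingCoeff, he, hc0])
    omega
end

section
/- Let G be a finite simple connected graph with at least two vertices, such that no two leaves of G are at distance 3 and U_2(G) = ∅, where U_2(G) = { v : deg_G(v) ≥ 2 and the minimum distance from v to the set of leaves of G equals 2 }. Then either G is a star (there is a vertex adjacent to all other vertices and every other vertex is a leaf) or every vertex of G has degree at least 2. -/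
open Finset Polynomial

/-- A leaf of `G` is a vertex of degree `1`. -/
def IsLeaf {V : Type*} [Fintype V] (G : SimpleGraph V) (v : V) : Prop :=
  deg G v = 1

/-- The minimum graph distance from `v` to the set of leaves of `G` equals `2`
(unreachable leaves are at infinite distance, hence do not count). -/
def DistToLeavesEqTwo {V : Type*} [Fintype V] (G : SimpleGraph V) (v : V) : Prop :=
  (∃ u, IsLeaf G u ∧ G.Reachable v u ∧ G.dist v u = 2) ∧
  (∀ u, IsLeaf G u → G.Reachable v u → 2 ≤ G.dist v u)

/-- `U_2(G)`: the set of vertices of degree at least `2` whose minimum distance to the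
set of leaves of `G` equals `2`. -/
def U2 {V : Type*} [Fintype V] (G : SimpleGraph V) : Set V :=
  {v | 2 ≤ deg G v ∧ DistToLeavesEqTwo G v}

lemma mem_deg_filter {V : Type*} [Fintype V] (G : SimpleGraph V) (v x : V) :
    x ∈ (@Finset.filter _ (fun u => G.Adj v u) (Classical.decPred _) Finset.univ) ↔
      G.Adj v x := by
  simp [Finset.mem_filter]

lemma deg_pos {V : Type*} [Fintype V] (G : SimpleGraph V) (hconn : G.Connected)
    (hcard : 2 ≤ Fintype.card V) (v : V) : 1 ≤ deg G v := by
  obtain ⟨w, hw⟩ := Fintype.exists_ne_of_one_lt_card (by omega) v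
  have hd : G.dist v w ≠ 0 := (hconn.pos_dist_of_ne (Ne.symm hw)).ne'
  obtain ⟨p, hp⟩ := SimpleGraph.exists_walk_of_dist_ne_zero hd
  cases p with
  | nil => simp at hp; simp at hd
  | cons h q =>
    rw [deg]; apply Finset.card_pos.mpr
    exact ⟨_, (mem_deg_filter G v _).mpr h⟩

lemma leaf_unique_nbr {V : Type*} [Fintype V] (G : SimpleGraph V) {u : V}
    (h : deg G u = 1) : ∃ c, ∀ x, G.Adj u x ↔ x = c := by
  rw [deg, Finset.card_eq_one] at h
  obtain ⟨c, hc⟩ := h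
  refine ⟨c, fun x => ?_⟩
  rw [← mem_deg_filter G u x, hc, Finset.mem_singleton]

lemma dist_leaf {V : Type*} [Fintype V] (G : SimpleGraph V) {u c w : V}
    (hconn : G.Connected) (hc : ∀ x, G.Adj u x ↔ x = c) (hw : w ≠ u) :
    G.dist u w = G.dist c w + 1 := by
  have huc : G.Adj u c := (hc c).mpr rfl
  have hle : G.dist u w ≤ G.dist c w + 1 := by
    have := hconn.dist_triangle (u := u) (v := c) (w := w)
    have h1 : G.dist u c = 1 := SimpleGraph.dist_eq_one_iff_adj.mpr huc
    omega
  have hd : G.dist u w ≠ 0 := (hconn.pos_dist_of_ne (Ne.symm hw)).ne'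
  obtain ⟨p, hp⟩ := SimpleGraph.exists_walk_of_dist_ne_zero hd
  cases p with
  | nil => simp at hp; simp at hd
  | cons h q =>
    rename_i x
    have hx : x = c := (hc x).mp h
    have : G.dist c w ≤ q.length := hx ▸ SimpleGraph.dist_le q
    simp only [SimpleGraph.Walk.length_cons] at hp
    omega

lemma exists_adj_dist {V : Type*} [Fintype V] (G : SimpleGraph V) {c v : V}
    (hconn : G.Connected) (h : G.dist c v ≠ 0) :
    ∃ w, G.Adj c w ∧ G.dist w v = G.dist c v - 1 := by
  obtain ⟨p, hp⟩ := SimpleGraph.exists_walk_of_dist_ne_zero h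
  cases p with
  | nil => simp at hp; simp at h
  | cons hadj q =>
    rename_i w
    refine ⟨w, hadj, ?_⟩
    have h1 : G.dist w v ≤ q.length := SimpleGraph.dist_le q
    have h2 := hconn.dist_triangle (u := c) (v := w) (w := v)
    have h3 : G.dist c w = 1 := SimpleGraph.dist_eq_one_iff_adj.mpr hadj
    simp only [SimpleGraph.Walk.length_cons] at hp
    omega

/-- A finite simple connected graph on at least two vertices with no two
leaves at distance `3` and with `U_2(G) = ∅` is either a star (some vertex is adjacent to
all the others, each of which is a leaf) or has minimum degree at least `2`. -/
theorem star_or_min_degree_two_of_U2_empty {V : Type*} [Fintype V] (G : SimpleGraph V)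
    (hconn : G.Connected) (hcard : 2 ≤ Fintype.card V)
    (hleaf : ¬ ∃ u v, IsLeaf G u ∧ IsLeaf G v ∧ G.dist u v = 3)
    (hU2 : U2 G = ∅) :
    (∃ c, (∀ v, v ≠ c → G.Adj c v) ∧ ∀ v, v ≠ c → deg G v = 1) ∨ (∀ v, 2 ≤ deg G v) := by
  by_cases hmin : ∀ v, 2 ≤ deg G v
  · exact Or.inr hmin
  left
  push_neg at hmin
  obtain ⟨u, hu⟩ := hmin
  have hu1 : deg G u = 1 := by have := deg_pos G hconn hcard u; omega
  have hu1' : IsLeaf G u := hu1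
  obtain ⟨c, hc⟩ := leaf_unique_nbr G hu1
  have huc : G.Adj u c := (hc c).mpr rfl
  have hucne : u ≠ c := huc.ne
  -- Claim 1: every neighbor of c other than u is a leaf
  have claim1 : ∀ w, w ≠ u → G.Adj c w → IsLeaf G w := by
    intro w hwu hcw
    by_contra hwl
    have hdegw : 2 ≤ deg G w := by
      have := deg_pos G hconn hcard w
      have : deg G w ≠ 1 := hwl
      omega
    have hwc : w ≠ c := hcw.ne'
    have hdwu : G.dist w u = 2 := by
      rw [SimpleGraph.dist_comm, dist_leaf G hconn hc hwu,
        SimpleGraph.dist_eq_one_iff_adj.mpr hcw]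
    have hnotU2 : ¬ DistToLeavesEqTwo G w := by
      intro hd
      have : w ∈ U2 G := ⟨hdegw, hd⟩
      rw [hU2] at this
      exact this
    rw [DistToLeavesEqTwo] at hnotU2
    push_neg at hnotU2
    obtain ⟨x, hxleaf, hxreach, hxlt⟩ :=
      hnotU2 ⟨u, hu1', hconn w u, hdwu⟩
    -- hxlt : G.dist w x < 2
    have hcases : G.dist w x = 0 ∨ G.dist w x = 1 := by omega
    rcases hcases with h0 | h1
    · exact hwl (hxreach.dist_eq_zero_iff.mp h0 ▸ hxleaf)
    · have hadjwx : G.Adj w x := SimpleGraph.dist_eq_one_iff_adj.mp h1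
      have hxu : x ≠ u := by
        rintro rfl
        exact hwc ((hc w).mp hadjwx.symm)
      obtain ⟨y, hy⟩ := leaf_unique_nbr G hxleaf
      have hyw : y = w := ((hy w).mp hadjwx.symm).symm
      have : G.dist x u = 3 := by
        rw [dist_leaf G hconn hy (Ne.symm hxu), hyw, hdwu]
      exact hleaf ⟨x, u, hxleaf, hu1', this⟩
  -- Claim 2: every vertex other than c is adjacent to c
  have claim2 : ∀ v, v ≠ c → G.Adj c v := by
    intro v hvc
    by_cases hvu : v = u
    · subst hvu; exact huc.symm
    by_contra hnadj
    have h0 : G.dist c v ≠ 0 := (hconn.pos_dist_of_ne (Ne.symm hvc)).ne'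
    have h1 : G.dist c v ≠ 1 := fun h => hnadj (SimpleGraph.dist_eq_one_iff_adj.mp h)
    have h2 : 2 ≤ G.dist c v := by omega
    obtain ⟨w, hcw, hwd⟩ := exists_adj_dist G hconn h0
    have hwu : w ≠ u := by
      rintro rfl
      have := dist_leaf G hconn hc hvu
      omega
    have hwleaf : IsLeaf G w := claim1 w hwu hcw
    obtain ⟨y, hy⟩ := leaf_unique_nbr G hwleaf
    have hyc : y = c := ((hy c).mp hcw.symm).symm
    have hwv0 : G.dist w v ≠ 0 := by omega
    obtain ⟨z, hwz, hzd⟩ := exists_adj_dist G hconn hwv0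
    have hzc : z = c := (hy z).mp hwz ▸ hyc ▸ rfl
    rw [hzc] at hzd
    omega
  refine ⟨c, claim2, fun v hvc => ?_⟩
  by_cases hvu : v = u
  · subst hvu; exact hu1
  · exact claim1 v hvu (claim2 v hvc)
end

section
/- Let P_n be the path on n ≥ 1 vertices. Then: (i) if n ≡ 0 (mod 3), then I(P_n, −1) = (−1)^n; (ii) if n ≡ 2 (mod 3), then I(P_n, −1) = (−1)^{n−1}; (iii) if n ≡ 1 (mod 3), then I(P_n, −1) = 0 and the first derivative satisfies I'(P_n, −1) = ((n+2)/3)·(−1)^{n−1}. -/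
open Finset Polynomial

/-! Writing `I_n = I(P_n, t)`, deleting the last vertex of the path gives
`I_{n+2} = I_{n+1} + t I_n`. At `t = -1` this reads `f_{n+2} = f_{n+1} - f_n`, so `f_{n+3} = -f_n`
with `f_0, f_1, f_2 = 1, 0, -1`. Differentiating, `g_{n+2} = g_{n+1} + f_n - g_n` for
`g_n = I_n'(-1)`, hence `g_{n+3} = -g_n + f_n + f_{n+1}`; along `n = 3k + 1` this is
`g_{3k+4} = -g_{3k+1} + (-1)^(k+1)`, which gives `g_{3k+1} = (k+1)(-1)^k`. -/

lemma indepPoly_eq_sum_indepFinsets {V : Type*} [Fintype V] (G : SimpleGraph V) :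
    indepPoly G = ∑ s ∈ indepFinsets G, (X : ℤ[X]) ^ s.card := by
  have hcard : ∀ s ∈ indepFinsets G, s.card ∈ range (indepNum G + 1) := fun s hs =>
    mem_range_succ_iff.mpr (le_sup hs)
  rw [← sum_fiberwise_of_maps_to hcard, indepPoly]
  refine sum_congr rfl fun i _ => ?_
  rw [sum_congr rfl fun s hs => by rw [(mem_filter.mp hs).2], sum_const, sCount, nsmul_eq_mul,
    C_eq_natCast]

/-- Independent sets of `P_n`, with the vertex `x_{i+1}` encoded as the natural number `i`. -/
def pathIndepSets (n : ℕ) : Finset (Finset ℕ) :=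
  (range n).powerset.filter fun s => ∀ a ∈ s, a + 1 ∉ s

lemma mem_pathIndepSets {n : ℕ} {s : Finset ℕ} :
    s ∈ pathIndepSets n ↔ (∀ a ∈ s, a < n) ∧ ∀ a ∈ s, a + 1 ∉ s := by
  simp [pathIndepSets, subset_iff]

lemma indepPoly_pathGraph_eq_sum (n : ℕ) :
    indepPoly (SimpleGraph.pathGraph n) = ∑ s ∈ pathIndepSets n, (X : ℤ[X]) ^ s.card := by
  classical
  rw [indepPoly_eq_sum_indepFinsets]
  refine sum_bij' (fun s _ => s.map Fin.valEmbedding)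
    (fun s hs => s.attachFin (mem_pathIndepSets.mp hs).1) (fun s hs => ?_) (fun s hs => ?_)
    (fun s _ => by ext; simp [Fin.val_inj]) (fun s _ => by ext; simp) (fun s _ => by rw [card_map])
  · have hindep : IsIndepSet _ s := (mem_filter.mp hs).2
    simp only [mem_pathIndepSets, mem_map, Fin.valEmbedding_apply, forall_exists_index, and_imp,
      forall_apply_eq_imp_iff₂, Fin.is_lt, implies_true, true_and, not_exists, not_and]
    intro u hu v hv huv
    exact hindep u hu v hv (SimpleGraph.pathGraph_adj.mpr (.inl huv.symm))
  · obtain ⟨-, hs⟩ := mem_pathIndepSets.mp hs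
    refine mem_filter.mpr ⟨mem_univ _, fun u hu v hv huv => ?_⟩
    rw [mem_attachFin] at hu hv
    rcases SimpleGraph.pathGraph_adj.mp huv with h | h
    · exact hs u hu (h ▸ hv)
    · exact hs v hv (h ▸ hu)

lemma filter_not_mem_pathIndepSets (n : ℕ) :
    (pathIndepSets (n + 2)).filter (n + 1 ∉ ·) = pathIndepSets (n + 1) := by
  ext s
  simp only [mem_filter, mem_pathIndepSets]
  constructor
  · rintro ⟨⟨hlt, hs⟩, hn⟩
    refine ⟨fun a ha => ?_, hs⟩
    have := hlt a ha
    have : a ≠ n + 1 := by rintro rfl; exact hn ha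
    omega
  · rintro ⟨hlt, hs⟩
    exact ⟨⟨fun a ha => (hlt a ha).trans (by omega), hs⟩, fun hn => by simpa using hlt _ hn⟩

lemma filter_mem_pathIndepSets (n : ℕ) :
    (pathIndepSets (n + 2)).filter (n + 1 ∈ ·) = (pathIndepSets n).image (insert (n + 1)) := by
  ext s
  simp only [mem_filter, mem_image, mem_pathIndepSets]
  constructor
  · rintro ⟨⟨hlt, hs⟩, hn⟩
    refine ⟨s.erase (n + 1), ⟨fun a ha => ?_, fun a ha h => hs a (mem_of_mem_erase ha)
      (mem_of_mem_erase h)⟩, insert_erase hn⟩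
    obtain ⟨hne, has⟩ := mem_erase.mp ha
    have := hlt a has
    have : a ≠ n := by rintro rfl; exact hs a has hn
    omega
  · rintro ⟨t, ⟨hlt, ht⟩, rfl⟩
    refine ⟨⟨fun a ha => ?_, fun a ha h => ?_⟩, mem_insert_self _ _⟩
    · rcases mem_insert.mp ha with rfl | ha
      · omega
      · exact (hlt a ha).trans (by omega)
    · rcases mem_insert.mp ha with rfl | ha <;> rcases mem_insert.mp h with h | h
      · omega
      · have := hlt _ h; omega
      · have := hlt a ha; omega
      · exact ht a ha h

lemma indepPoly_pathGraph_add_two (n : ℕ) :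
    indepPoly (SimpleGraph.pathGraph (n + 2)) =
      indepPoly (SimpleGraph.pathGraph (n + 1)) + X * indepPoly (SimpleGraph.pathGraph n) := by
  have hnotMem : ∀ t ∈ pathIndepSets n, n + 1 ∉ t := fun t ht h => by
    simpa using (mem_pathIndepSets.mp ht).1 _ h
  simp only [indepPoly_pathGraph_eq_sum]
  rw [← sum_filter_not_add_sum_filter _ (n + 1 ∈ ·), filter_not_mem_pathIndepSets,
    filter_mem_pathIndepSets, sum_image, mul_sum]
  · refine congrArg _ (sum_congr rfl fun t ht => ?_)
    rw [card_insert_of_notMem (hnotMem t ht), pow_succ']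
  · intro t ht u hu htu
    rw [← erase_insert (hnotMem t ht), ← erase_insert (hnotMem u hu)]
    exact congrArg (·.erase (n + 1)) htu

lemma indepPoly_pathGraph_zero : indepPoly (SimpleGraph.pathGraph 0) = 1 := by
  rw [indepPoly_pathGraph_eq_sum, show pathIndepSets 0 = {∅} by decide]
  simp

lemma indepPoly_pathGraph_one : indepPoly (SimpleGraph.pathGraph 1) = 1 + X := by
  rw [indepPoly_pathGraph_eq_sum, show pathIndepSets 1 = {∅, {0}} by decide]
  simp

lemma indepPoly_pathGraph_two : indepPoly (SimpleGraph.pathGraph 2) = 1 + 2 * X := by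
  rw [indepPoly_pathGraph_eq_sum, show pathIndepSets 2 = {∅, {0}, {1}} by decide]
  simp [two_mul]

lemma eval_neg_one_indepPoly_pathGraph_add_three (n : ℕ) :
    (indepPoly (SimpleGraph.pathGraph (n + 3))).eval (-1) =
      -(indepPoly (SimpleGraph.pathGraph n)).eval (-1) := by
  rw [indepPoly_pathGraph_add_two, indepPoly_pathGraph_add_two n]
  simp only [eval_add, eval_mul, eval_X]
  ring

lemma eval_neg_one_indepPoly_pathGraph_three_mul_add (k r : ℕ) :
    (indepPoly (SimpleGraph.pathGraph (3 * k + r))).eval (-1) =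
      (-1) ^ k * (indepPoly (SimpleGraph.pathGraph r)).eval (-1) := by
  induction k with
  -- `simp` cannot rewrite `3 * 0 + r` here: the `Fintype` instance of `pathGraph` depends on it.
  | zero => rw [Nat.mul_zero, Nat.zero_add, pow_zero, one_mul]
  | succ k ih =>
    rw [show 3 * (k + 1) + r = 3 * k + r + 3 by ring, eval_neg_one_indepPoly_pathGraph_add_three,
      ih, pow_succ]
    ring

lemma eval_neg_one_derivative_indepPoly_pathGraph_add_three (n : ℕ) :
    (derivative (indepPoly (SimpleGraph.pathGraph (n + 3)))).eval (-1) =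
      -(derivative (indepPoly (SimpleGraph.pathGraph n))).eval (-1) +
        (indepPoly (SimpleGraph.pathGraph n)).eval (-1) +
        (indepPoly (SimpleGraph.pathGraph (n + 1))).eval (-1) := by
  rw [indepPoly_pathGraph_add_two, indepPoly_pathGraph_add_two n]
  simp only [derivative_add, derivative_mul, derivative_X, eval_add, eval_mul, eval_X, one_mul]
  ring

lemma eval_neg_one_derivative_indepPoly_pathGraph_three_mul_add_one (k : ℕ) :
    (derivative (indepPoly (SimpleGraph.pathGraph (3 * k + 1)))).eval (-1) =
      (k + 1) * (-1) ^ k := by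
  induction k with
  | zero => simp [indepPoly_pathGraph_one]
  | succ k ih =>
    have hf₁ := eval_neg_one_indepPoly_pathGraph_three_mul_add k 1
    have hf₂ := eval_neg_one_indepPoly_pathGraph_three_mul_add k 2
    rw [indepPoly_pathGraph_one] at hf₁
    rw [indepPoly_pathGraph_two] at hf₂
    rw [show 3 * (k + 1) + 1 = 3 * k + 1 + 3 by ring,
      eval_neg_one_derivative_indepPoly_pathGraph_add_three, ih, hf₁, hf₂]
    simp only [eval_add, eval_mul, eval_one, eval_X, eval_ofNat, pow_succ]
    push_cast
    ring

theorem eval_indepPoly_pathGraph_general (n : ℕ) :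
    (n % 3 = 0 → (indepPoly (SimpleGraph.pathGraph n)).eval (-1) = (-1) ^ n) ∧
    (n % 3 = 2 → (indepPoly (SimpleGraph.pathGraph n)).eval (-1) = (-1) ^ (n - 1)) ∧
    (n % 3 = 1 → (indepPoly (SimpleGraph.pathGraph n)).eval (-1) = 0 ∧
      (Polynomial.derivative (indepPoly (SimpleGraph.pathGraph n))).eval (-1) =
        (((n + 2) / 3 : ℕ) : ℤ) * (-1) ^ (n - 1)) := by
  obtain ⟨k, r, hr, rfl⟩ : ∃ k r, r < 3 ∧ n = 3 * k + r :=
    ⟨n / 3, n % 3, n.mod_lt (by norm_num), (n.div_add_mod 3).symm⟩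
  have hf := eval_neg_one_indepPoly_pathGraph_three_mul_add k r
  interval_cases r
  · refine ⟨fun _ => ?_, fun h => absurd h (by omega), fun h => absurd h (by omega)⟩
    rw [hf, indepPoly_pathGraph_zero, add_zero, pow_mul]
    norm_num
  · refine ⟨fun h => absurd h (by omega), fun h => absurd h (by omega), fun _ => ⟨?_, ?_⟩⟩
    · rw [hf, indepPoly_pathGraph_one]
      simp
    · rw [eval_neg_one_derivative_indepPoly_pathGraph_three_mul_add_one,
        show (3 * k + 1 + 2) / 3 = k + 1 by omega, Nat.add_sub_cancel, pow_mul]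
      norm_num
  · refine ⟨fun h => absurd h (by omega), fun _ => ?_, fun h => absurd h (by omega)⟩
    rw [hf, indepPoly_pathGraph_two, show 3 * k + 2 - 1 = 3 * k + 1 by omega, pow_succ, pow_mul]
    norm_num

/-- Values of the independence polynomial of the path `P_n` (and of its
derivative) at `-1`:  `I(P_n,-1) = (-1)^n` if `n ≡ 0 (mod 3)`, `I(P_n,-1) = (-1)^{n-1}` if
`n ≡ 2 (mod 3)`, and if `n ≡ 1 (mod 3)` then `I(P_n,-1) = 0` and
`I'(P_n,-1) = ((n+2)/3)·(-1)^{n-1}`. -/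
theorem eval_indepPoly_pathGraph (n : ℕ) (hn : 1 ≤ n) :
    (n % 3 = 0 → (indepPoly (SimpleGraph.pathGraph n)).eval (-1) = (-1) ^ n) ∧
    (n % 3 = 2 → (indepPoly (SimpleGraph.pathGraph n)).eval (-1) = (-1) ^ (n - 1)) ∧
    (n % 3 = 1 → (indepPoly (SimpleGraph.pathGraph n)).eval (-1) = 0 ∧
      (Polynomial.derivative (indepPoly (SimpleGraph.pathGraph n))).eval (-1) =
        (((n + 2) / 3 : ℕ) : ℤ) * (-1) ^ (n - 1)) :=
  eval_indepPoly_pathGraph_general n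
end
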